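/- arXiv:2302.14296 — 2 statements merged into one kernel-verified Lean document; each statement's English description precedes it below -/
import Mathlib

section
/- Let A be an invertible n×n matrix, B an n×p matrix, Σ a symmetric positive definite n×n matrix, U a p×n matrix, and M, Λ matrices (M symmetric p×p, Λ symmetric n×n) satisfying M·U·Σ⁻¹ + Bᵀ·Λ·A = 0 and R − M + Bᵀ·Λ·B = 0 with R symmetric positive definite. Then M is invertible. -/
open Matrix

theorem multiplier_invertible {n p : ℕ}
    (A : Matrix (Fin n) (Fin n) ℝ) (hA : IsUnit A)
    (B : Matrix (Fin n) (Fin p) ℝ)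
    (S : Matrix (Fin n) (Fin n) ℝ) (hS : S.PosDef)
    (U : Matrix (Fin p) (Fin n) ℝ)
    (M : Matrix (Fin p) (Fin p) ℝ) (hM : M.IsSymm)
    (Λ : Matrix (Fin n) (Fin n) ℝ) (hΛ : Λ.IsSymm)
    (R : Matrix (Fin p) (Fin p) ℝ) (hR : R.PosDef)
    (h1 : M * U * S⁻¹ + Bᵀ * Λ * A = 0)
    (h2 : R - M + Bᵀ * Λ * B = 0) : IsUnit M := by
  have hAinv : A * A⁻¹ = 1 := mul_nonsing_inv A ((isUnit_iff_isUnit_det A).mp hA)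
  have h1' : Bᵀ * Λ * A = -(M * U * S⁻¹) :=
    eq_neg_of_add_eq_zero_left (by rw [add_comm]; exact h1)
  have hBL : Bᵀ * Λ = -(M * U * S⁻¹ * A⁻¹) := by
    calc Bᵀ * Λ = Bᵀ * Λ * (A * A⁻¹) := by rw [hAinv, Matrix.mul_one]
      _ = (Bᵀ * Λ * A) * A⁻¹ := by simp only [Matrix.mul_assoc]
      _ = -(M * U * S⁻¹) * A⁻¹ := by rw [h1']
      _ = -(M * U * S⁻¹ * A⁻¹) := by rw [Matrix.neg_mul]
  have h2' : M = R + Bᵀ * Λ * B := by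
    have hz : R + Bᵀ * Λ * B - M = 0 := by rw [← h2]; abel
    exact (sub_eq_zero.mp hz).symm
  have h2'' : M = R + -(M * U * S⁻¹ * A⁻¹ * B) :=
    h2'.trans (by rw [hBL, Matrix.neg_mul])
  have key : M * (1 + U * S⁻¹ * A⁻¹ * B) = R := by
    rw [Matrix.mul_add, Matrix.mul_one]
    have hMX : M * (U * S⁻¹ * A⁻¹ * B) = M * U * S⁻¹ * A⁻¹ * B := by
      simp only [Matrix.mul_assoc]
    rw [hMX]
    have hz : M - (R + -(M * U * S⁻¹ * A⁻¹ * B)) = 0 := sub_eq_zero.mpr h2''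
    have h3 : M + M * U * S⁻¹ * A⁻¹ * B - R
        = M - (R + -(M * U * S⁻¹ * A⁻¹ * B)) := by abel
    exact sub_eq_zero.mp (h3 ▸ hz)
  have hdet : M.det * (1 + U * S⁻¹ * A⁻¹ * B).det = R.det := by
    rw [← Matrix.det_mul, key]
  have hRdet : R.det ≠ 0 := ne_of_gt hR.det_pos
  have hMdet : M.det ≠ 0 := by
    intro h
    rw [h, zero_mul] at hdet
    exact hRdet hdet.symm
  exact (isUnit_iff_isUnit_det M).mpr (isUnit_iff_ne_zero.mpr hMdet)
end

section
/- Let A be an invertible n×n matrix, B an n×p matrix, Σ ≻ 0 symmetric n×n, U ∈ ℝ^{p×n}, R ≻ 0 symmetric p×p, λ ≥ 0 a scalar, and e ∈ ℝ^p. Suppose M ∈ ℝ^{p×p} symmetric and Λ ∈ ℝ^{n×n} symmetric satisfy M·U·Σ⁻¹ + Bᵀ·Λ·A = 0 and R − M + Bᵀ·Λ·B + λ·e·eᵀ = 0. Then det(M) ≠ 0. -/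
open Matrix

lemma aux_psd {p : ℕ} (l : ℝ) (hl : 0 ≤ l) (e : Fin p → ℝ) :
    (l • Matrix.vecMulVec e e).PosSemidef := by
  rw [Matrix.posSemidef_iff_dotProduct_mulVec]
  constructor
  · unfold Matrix.IsHermitian
    ext i j
    simp [Matrix.vecMulVec_apply, mul_comm]
  · intro x
    have : (l • Matrix.vecMulVec e e) *ᵥ x = l • ((e ⬝ᵥ x) • e) := by
      ext i
      simp [Matrix.mulVec, Matrix.vecMulVec_apply, dotProduct, Finset.mul_sum,
        Finset.sum_mul, mul_assoc, mul_comm, mul_left_comm]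
    rw [this]
    simp only [dotProduct_smul, smul_eq_mul, RCLike.star_def, starRingEnd_apply]
    have he : star x ⬝ᵥ e = e ⬝ᵥ x := by
      simp [dotProduct, mul_comm]
    rw [he]
    nlinarith [mul_self_nonneg (e ⬝ᵥ x)]

theorem multiplier_det_ne_zero_constrained {n p : ℕ}
    (A : Matrix (Fin n) (Fin n) ℝ) (hA : IsUnit A)
    (B : Matrix (Fin n) (Fin p) ℝ)
    (S : Matrix (Fin n) (Fin n) ℝ) (hS : S.PosDef)
    (U : Matrix (Fin p) (Fin n) ℝ)
    (R : Matrix (Fin p) (Fin p) ℝ) (hR : R.PosDef)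
    (l : ℝ) (hl : 0 ≤ l) (e : Fin p → ℝ)
    (M : Matrix (Fin p) (Fin p) ℝ) (hM : M.IsSymm)
    (Λ : Matrix (Fin n) (Fin n) ℝ) (hΛ : Λ.IsSymm)
    (h1 : M * U * S⁻¹ + Bᵀ * Λ * A = 0)
    (h2 : R - M + Bᵀ * Λ * B + l • Matrix.vecMulVec e e = 0) :
    M.det ≠ 0 := by
  have hAd : IsUnit A.det := (Matrix.isUnit_iff_isUnit_det A).mp hA
  have hBL : Bᵀ * Λ = -(M * U * S⁻¹ * A⁻¹) := by
    have h1' : Bᵀ * Λ * A = -(M * U * S⁻¹) := by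
      rw [eq_neg_iff_add_eq_zero, add_comm]; exact h1
    calc Bᵀ * Λ = Bᵀ * Λ * (A * A⁻¹) := by
          rw [Matrix.mul_nonsing_inv A hAd, Matrix.mul_one]
      _ = (Bᵀ * Λ * A) * A⁻¹ := by simp only [Matrix.mul_assoc]
      _ = -(M * U * S⁻¹ * A⁻¹) := by rw [h1', Matrix.neg_mul]
  have key : R + l • Matrix.vecMulVec e e = M * (1 + U * S⁻¹ * A⁻¹ * B) := by
    have h2' : R + l • Matrix.vecMulVec e e = M - Bᵀ * Λ * B := by
      rw [← sub_eq_zero, ← h2]; abel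
    rw [h2', hBL]
    rw [Matrix.neg_mul, sub_neg_eq_add, Matrix.mul_add, Matrix.mul_one]
    rw [Matrix.mul_assoc M, Matrix.mul_assoc M, Matrix.mul_assoc M,
      Matrix.mul_assoc U, Matrix.mul_assoc U, Matrix.mul_assoc S⁻¹]
  have hP : (R + l • Matrix.vecMulVec e e).PosDef :=
    hR.add_posSemidef (aux_psd l hl e)
  have hdet : (R + l • Matrix.vecMulVec e e).det ≠ 0 := ne_of_gt hP.det_pos
  rw [key, Matrix.det_mul] at hdet
  exact fun h => hdet (by rw [h, zero_mul])
end
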